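/- arXiv:math/0510507 — 6 statements merged into one kernel-verified Lean document; each statement's English description precedes it below -/
import Mathlib

section
/- The Magnus expansion M : F_{m_1,…,m_n} → ℤ⟨x_1,…,x_n⟩ is injective. -/
/-- Noncommutative formal power series in `n` variables over `ℤ`, represented as
coefficient functions on words in the variables. -/
def NC (n : ℕ) : Type := List (Fin n) → ℤ

namespace NC
variable {n : ℕ}

instance : AddCommGroup (NC n) := inferInstanceAs (AddCommGroup (List (Fin n) → ℤ))

/-- Convolution product of noncommutative power series. -/
def mul' (f g : NC n) : NC n :=
  fun w => ∑ i ∈ Finset.range (w.length + 1), f (w.take i) * g (w.drop i)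

/-- The series `1`. -/
def one' : NC n := fun w => if w = [] then 1 else 0

instance : One (NC n) := ⟨one'⟩
instance : Mul (NC n) := ⟨mul'⟩

theorem one_mul' (f : NC n) : mul' one' f = f := by
  funext w
  rw [mul', Finset.sum_eq_single 0]
  · simp [one']
  · intro b hb hb0
    have hw : w ≠ [] := by
      intro h; subst h; simp at hb; omega
    have : w.take b ≠ [] := by
      simp [List.take_eq_nil_iff]; tauto
    simp [one', this]
  · intro h; simp at h

theorem mul_one' (f : NC n) : mul' f one' = f := by
  funext w
  rw [mul', Finset.sum_eq_single w.length]
  · simp [one']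
  · intro b hb hb0
    have hblt : b < w.length := by simp at hb; omega
    have : w.drop b ≠ [] := by
      simp [List.drop_eq_nil_iff]; omega
    simp [one', this]
  · intro h; simp at h

theorem mul_assoc' (f g h : NC n) : mul' (mul' f g) h = mul' f (mul' g h) := by
  funext w
  rw [mul', mul']
  simp only [mul']
  calc
    ∑ i ∈ Finset.range (w.length + 1),
        (∑ j ∈ Finset.range ((w.take i).length + 1),
          f ((w.take i).take j) * g ((w.take i).drop j)) * h (w.drop i)
      = ∑ i ∈ Finset.range (w.length + 1), ∑ j ∈ Finset.range (i + 1),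
          f (w.take j) * ((g ((w.drop j).take (i - j))) * h (w.drop i)) := by
        refine Finset.sum_congr rfl fun i hi => ?_
        have hiL : i ≤ w.length := by simp at hi; omega
        rw [Finset.sum_mul]
        have hlen : (w.take i).length = i := by
          rw [List.length_take]; omega
        rw [hlen]
        refine Finset.sum_congr rfl fun j hj => ?_
        have hji : j ≤ i := by simp at hj; omega
        have h1 : (w.take i).take j = w.take j := by
          rw [List.take_take]; congr 1; omega
        have h2 : (w.take i).drop j = (w.drop j).take (i - j) := by
          rw [List.drop_take]
        rw [h1, h2, mul_assoc]
    _ = ∑ j ∈ Finset.range (w.length + 1), ∑ i ∈ Finset.Ico j (w.length + 1),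
          f (w.take j) * ((g ((w.drop j).take (i - j))) * h (w.drop i)) := by
        rw [Finset.sum_sigma', Finset.sum_sigma']
        apply Finset.sum_nbij' (fun p => ⟨p.2, p.1⟩) (fun p => ⟨p.2, p.1⟩) <;>
          simp <;> omega
    _ = ∑ j ∈ Finset.range (w.length + 1),
          f (w.take j) * ∑ k ∈ Finset.range ((w.drop j).length + 1),
            g ((w.drop j).take k) * h ((w.drop j).drop k) := by
        refine Finset.sum_congr rfl fun j hj => ?_
        have hjL : j ≤ w.length := by simp at hj; omega
        rw [Finset.mul_sum, Finset.sum_Ico_eq_sum_range]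
        have hL : (w.drop j).length + 1 = w.length + 1 - j := by
          simp only [List.length_drop]; omega
        rw [← hL]
        refine Finset.sum_congr rfl fun k hk => ?_
        have h3 : (w.drop j).drop k = w.drop (j + k) := by
          rw [List.drop_drop]
        have h4 : j + k - j = k := by omega
        rw [h4, h3]

theorem add_apply (f g : NC n) (w : List (Fin n)) : (f + g) w = f w + g w := rfl
theorem zero_apply (w : List (Fin n)) : (0 : NC n) w = 0 := rfl

theorem left_distrib' (f g h : NC n) : mul' f (g + h) = mul' f g + mul' f h := by
  funext w
  show mul' f (g + h) w = mul' f g w + mul' f h w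
  simp [mul', add_apply, mul_add, Finset.sum_add_distrib]

theorem right_distrib' (f g h : NC n) : mul' (f + g) h = mul' f h + mul' g h := by
  funext w
  show mul' (f + g) h w = mul' f h w + mul' g h w
  simp [mul', add_apply, add_mul, Finset.sum_add_distrib]

theorem zero_mul' (f : NC n) : mul' 0 f = 0 := by
  funext w; simp [mul', zero_apply]

theorem mul_zero' (f : NC n) : mul' f 0 = 0 := by
  funext w; simp [mul', zero_apply]

instance : Ring (NC n) :=
  { (inferInstanceAs (AddCommGroup (NC n)) : AddCommGroup (NC n)) with
    mul := mul'
    one := one'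
    mul_assoc := mul_assoc'
    one_mul := one_mul'
    mul_one := mul_one'
    left_distrib := left_distrib'
    right_distrib := right_distrib'
    zero_mul := zero_mul'
    mul_zero := mul_zero' }

/-- The variable `x_i`, as a noncommutative power series. -/
def X (i : Fin n) : NC n := fun w => if w = [i] then 1 else 0

/-- The geometric series `1 - x_i + x_i^2 - x_i^3 + …`. -/
def geom (i : Fin n) : NC n :=
  fun w => if ∀ a ∈ w, a = i then (-1) ^ w.length else 0

end NC

open List Finset
namespace MagnusProof
variable {n : ℕ}

theorem mul_apply (f g : NC n) (w : List (Fin n)) :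
    (f * g) w = ∑ i ∈ Finset.range (w.length + 1), f (w.take i) * g (w.drop i) := rfl

theorem one_apply (w : List (Fin n)) : (1 : NC n) w = if w = [] then 1 else 0 := rfl

/-- The factor associated to a letter of a word in the free group. -/
def F (p : Fin n × Bool) : NC n := if p.2 then 1 + NC.X p.1 else NC.geom p.1

/-- The series associated to a word in the free group. -/
def Q (L : List (Fin n × Bool)) : NC n := (L.map F).prod

/-- The underlying word of letters. -/
def wd (L : List (Fin n × Bool)) : List (Fin n) := L.map Prod.fst

/-- Coefficient of `x_i^k` in a factor with sign `b`. -/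
def c (b : Bool) (k : ℕ) : ℤ := if b then (if k ≤ 1 then 1 else 0) else (-1) ^ k

theorem Q_nil : Q ([] : List (Fin n × Bool)) = 1 := rfl

theorem Q_cons (p : Fin n × Bool) (L : List (Fin n × Bool)) : Q (p :: L) = F p * Q L := by
  simp [Q]

theorem onePlusX_apply (i : Fin n) (u : List (Fin n)) :
    (1 + NC.X i) u = (if u = [] then 1 else 0) + (if u = [i] then 1 else 0) := by
  rw [NC.add_apply]; rfl

theorem F_apply_ne {i : Fin n} (b : Bool) {u : List (Fin n)} (a : Fin n) (ha : a ∈ u)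
    (hai : a ≠ i) : F (i, b) u = 0 := by
  have hne : u ≠ [] := ne_nil_of_mem ha
  have hne2 : u ≠ [i] := by
    intro h; subst h; simp only [List.mem_singleton] at ha; exact hai ha
  cases b
  · show NC.geom i u = 0
    rw [NC.geom, if_neg]
    push_neg
    exact ⟨a, ha, hai⟩
  · show (1 + NC.X i) u = 0
    rw [onePlusX_apply, if_neg hne, if_neg hne2, add_zero]

theorem F_rep (i : Fin n) (b : Bool) (k : ℕ) :
    F (i, b) (List.replicate k i) = c b k := by
  cases b
  · show NC.geom i (List.replicate k i) = (-1) ^ k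
    rw [NC.geom, if_pos, List.length_replicate]
    intro a ha; exact List.eq_of_mem_replicate ha
  · show (1 + NC.X i) (List.replicate k i) = _
    rw [onePlusX_apply]
    match k with
    | 0 => simp [c]
    | 1 => simp [c]
    | (m+2) => 
      have h1 : List.replicate (m+2) i ≠ [] := by simp
      have h2 : List.replicate (m+2) i ≠ [i] := by
        intro h; have := congrArg List.length h; simp at this
      rw [if_neg h1, if_neg h2]
      simp [c]

theorem F_ne_shape {p : Fin n × Bool} {u : List (Fin n)} (h : F p u ≠ 0) :
    ∀ a ∈ u, a = p.1 := by
  by_contra hc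
  push_neg at hc
  obtain ⟨a, ha, hane⟩ := hc
  obtain ⟨i, b⟩ := p
  exact h (F_apply_ne b a ha hane)


/-- Number of maximal runs of equal letters. -/
def rc : List (Fin n) → ℕ
  | [] => 0
  | a :: l => rc l + (if l.head? = some a then 0 else 1)

@[simp] theorem rc_nil : rc ([] : List (Fin n)) = 0 := rfl

theorem rc_cons (a : Fin n) (l : List (Fin n)) :
    rc (a :: l) = rc l + (if l.head? = some a then 0 else 1) := rfl

theorem rc_pos {l : List (Fin n)} (h : l ≠ []) : 0 < rc l := by
  induction l with
  | nil => exact absurd rfl h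
  | cons a l ih =>
    rw [rc_cons]
    rcases l with _ | ⟨b, l'⟩
    · simp
    · split_ifs with h1
      · have := ih (by simp)
        omega
      · omega

theorem rc_cons_le (a : Fin n) (l : List (Fin n)) : rc l ≤ rc (a :: l) := by
  rw [rc_cons]; omega

theorem head_eq_of_rc {a : Fin n} {l : List (Fin n)} (h : rc (a :: l) = rc l) :
    l.head? = some a := by
  rw [rc_cons] at h
  by_contra hc
  rw [if_neg hc] at h
  omega

theorem rc_rep_append (i : Fin n) {m : ℕ} (hm : m ≠ 0) (u : List (Fin n)) :
    rc (List.replicate m i ++ u) = rc (i :: u) := by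
  induction m with
  | zero => exact absurd rfl hm
  | succ k ih =>
    rcases Nat.eq_zero_or_pos k with rfl | hk
    · simp
    · have hk0 : k ≠ 0 := by omega
      rw [List.replicate_succ, List.cons_append, rc_cons, ih hk0]
      have hh : (List.replicate k i ++ u).head? = some i := by
        rcases k with _ | k'
        · omega
        · simp [List.replicate_succ]
      rw [if_pos hh, add_zero]

theorem supp : ∀ (L : List (Fin n × Bool)) (v : List (Fin n)), Q L v ≠ 0 →
    rc v ≤ rc (wd L) ∧ (rc v = rc (wd L) → v.head? = (wd L).head?) := by
  intro L
  induction L with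
  | nil =>
    intro v h
    have hv : v = [] := by
      by_contra hc
      rw [Q_nil, one_apply, if_neg hc] at h
      exact h rfl
    subst hv
    exact ⟨le_refl _, fun _ => rfl⟩
  | cons p L' ih =>
    intro v h
    rw [Q_cons, mul_apply] at h
    obtain ⟨k, hk, hne⟩ := Finset.exists_ne_zero_of_sum_ne_zero h
    have hF : F p (v.take k) ≠ 0 := left_ne_zero_of_mul hne
    have hQ : Q L' (v.drop k) ≠ 0 := right_ne_zero_of_mul hne
    have hall : ∀ a ∈ v.take k, a = p.1 := F_ne_shape hF
    have hkle : k ≤ v.length := by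
      simp only [Finset.mem_range] at hk; omega
    obtain ⟨hle, hhd⟩ := ih _ hQ
    have hwd : wd (p :: L') = p.1 :: wd L' := rfl
    rw [hwd]
    rcases Nat.eq_zero_or_pos k with rfl | hkpos
    · rw [List.drop_zero] at hle hhd
      constructor
      · exact le_trans hle (rc_cons_le _ _)
      · intro heq
        have h1 : rc (wd L') = rc (p.1 :: wd L') :=
          le_antisymm (rc_cons_le _ _) (heq ▸ hle)
        rw [hhd (by omega), head_eq_of_rc h1.symm]
        rfl
    · have hv : v = List.replicate k p.1 ++ v.drop k := by
        conv_lhs => rw [← List.take_append_drop k v]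
        congr 1
        exact List.eq_replicate_iff.mpr ⟨by rw [List.length_take]; omega, hall⟩
      set u := v.drop k with hu
      rw [hv, rc_rep_append _ (by omega)]
      constructor
      · rw [rc_cons, rc_cons]
        split_ifs with h1 h2 h2
        · omega
        · -- head? u = some p.1, head? wd L' ≠ some p.1
          omega
        · -- head? u ≠ some p.1, head? wd L' = some p.1
          have hne' : rc u ≠ rc (wd L') := by
            intro he
            exact h1 (by rw [hhd he, h2])
          have hwne : wd L' ≠ [] := by
            intro hc; rw [hc] at h2; simp at h2
          omega
        · omega
      · intro _
        rcases k with _ | k'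
        · omega
        · simp [List.replicate_succ]
theorem foreign {L : List (Fin n × Bool)} {i : Fin n} {m : ℕ} (hm : m ≠ 0)
    (hh : (wd L).head? ≠ some i) : Q L (List.replicate m i ++ wd L) = 0 := by
  by_contra h
  obtain ⟨hle, -⟩ := supp L _ h
  rw [rc_rep_append _ hm, rc_cons, if_neg hh] at hle
  omega

/-- Length of the maximal leading run of letter `i`. -/
def lead (i : Fin n) : List (Fin n × Bool) → ℕ
  | [] => 0
  | p :: L => if p.1 = i then lead i L + 1 else 0

/-- The word after removing the maximal leading run of letter `i`. -/
def rst (i : Fin n) : List (Fin n × Bool) → List (Fin n)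
  | [] => []
  | p :: L => if p.1 = i then rst i L else p.1 :: wd L

/-- Number of negative letters. -/
def ngn : List (Fin n × Bool) → ℕ
  | [] => 0
  | p :: L => (if p.2 then 0 else 1) + ngn L

theorem wd_eq (i : Fin n) (L : List (Fin n × Bool)) :
    wd L = List.replicate (lead i L) i ++ rst i L := by
  induction L with
  | nil => rfl
  | cons p L ih =>
    by_cases h : p.1 = i
    · show p.1 :: wd L = _
      rw [lead, rst, if_pos h, if_pos h, List.replicate_succ, List.cons_append, ← ih, h]
    · show p.1 :: wd L = _
      rw [lead, rst, if_neg h, if_neg h, List.replicate_zero, List.nil_append]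

theorem rst_head (i : Fin n) (L : List (Fin n × Bool)) : (rst i L).head? ≠ some i := by
  induction L with
  | nil => simp [rst]
  | cons p L ih =>
    by_cases h : p.1 = i
    · rw [rst, if_pos h]; exact ih
    · rw [rst, if_neg h]
      simp [h]

theorem key (i : Fin n) (ε : Bool) (L' : List (Fin n × Bool)) (s : ℕ) {r : List (Fin n)}
    (hr : r.head? ≠ some i) :
    Q ((i, ε) :: L') (List.replicate s i ++ r) =
      ∑ k ∈ Finset.range (s + 1), c ε k * Q L' (List.replicate (s - k) i ++ r) := by
  rw [Q_cons, mul_apply]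
  have hlen : (List.replicate s i ++ r).length = s + r.length := by simp
  rw [hlen]
  have hsub : Finset.range (s + 1) ⊆ Finset.range (s + r.length + 1) :=
    Finset.range_subset_range.mpr (by omega)
  have hzero : ∀ k ∈ Finset.range (s + r.length + 1), k ∉ Finset.range (s + 1) →
      F (i, ε) ((List.replicate s i ++ r).take k) * Q L' ((List.replicate s i ++ r).drop k) = 0 := by
    intro k hk hnk
    simp only [Finset.mem_range] at hk hnk
    have hks : s < k := by omega
    rcases r with _ | ⟨a, r'⟩
    · simp at hk; omega
    · have ha : a ≠ i := by
        intro h; exact hr (by rw [h]; rfl)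
      have hmem : a ∈ (List.replicate s i ++ a :: r').take k := by
        have : k = (List.replicate s i).length + (k - s) := by simp; omega
        rw [this, List.take_append]
        have h2 : k - s = (k - s - 1) + 1 := by omega
        rw [h2, Nat.add_sub_cancel_left, List.take_succ_cons]
        exact List.mem_append_right _ List.mem_cons_self
      rw [F_apply_ne ε a hmem ha, zero_mul]
  rw [← Finset.sum_subset hsub hzero]
  apply Finset.sum_congr rfl
  intro k hk
  have hks : k ≤ s := by simp only [Finset.mem_range] at hk; omega
  have ht : (List.replicate s i ++ r).take k = List.replicate k i := by
    rw [List.take_append_of_le_length (by simp; omega), List.take_replicate,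
      Nat.min_eq_left hks]
  have hd : (List.replicate s i ++ r).drop k = List.replicate (s - k) i ++ r := by
    rw [List.drop_append_of_le_length (by simp; omega), List.drop_replicate]
  rw [ht, hd, F_rep]

theorem npow_mod (e : ℕ) : (-1 : ℤ) ^ e = (-1 : ℤ) ^ (e % 2) := by
  conv_lhs => rw [← Nat.div_add_mod e 2]
  rw [pow_add, pow_mul, neg_one_sq, one_pow, one_mul]

theorem pos_congr {e e' : ℕ} (h : e % 2 = e' % 2) {x : ℤ} (hx : 0 < (-1 : ℤ) ^ e * x) :
    0 < (-1 : ℤ) ^ e' * x := by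
  rwa [npow_mod e', ← h, ← npow_mod]

theorem absorb {e k : ℕ} {y : ℤ} (h : 0 < (-1 : ℤ) ^ (e + k) * y) :
    0 < (-1 : ℤ) ^ e * ((-1 : ℤ) ^ k * y) := by
  rwa [← mul_assoc, ← pow_add]
theorem main : ∀ L : List (Fin n × Bool),
    List.Chain' (fun a b => ¬(a.1 = b.1 ∧ b.2 = !a.2)) L → ∀ (i : Fin n) (m : ℕ),
    (L.head? = some (i, false) →
      0 < (-1 : ℤ) ^ (ngn L + m + lead i L) * Q L (List.replicate m i ++ rst i L)) ∧
    (L.head? ≠ some (i, false) → m ≤ lead i L →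
      0 < (-1 : ℤ) ^ (ngn L) * Q L (List.replicate m i ++ rst i L)) ∧
    (L.head? ≠ some (i, false) → lead i L < m →
      Q L (List.replicate m i ++ rst i L) = 0) := by
  intro L
  induction L with
  | nil =>
    intro _ i m
    refine ⟨by simp, ?_, ?_⟩
    · intro _ hm
      have hm0 : m = 0 := by simpa [lead] using hm
      subst hm0
      simp [Q_nil, one_apply, ngn, rst]
    · intro _ hm
      have hl : lead i ([] : List (Fin n × Bool)) = 0 := rfl
      have hne : List.replicate m i ++ rst i [] ≠ [] := by
        simp [rst]; omega
      simp [Q_nil, one_apply, hne]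
  | cons p L' IH =>
    obtain ⟨i₁, ε⟩ := p
    intro hred i m
    have hred' := hred.tail
    have hcomp : L'.head? ≠ some (i₁, !ε) := by
      intro hc
      rcases L' with _ | ⟨q, L''⟩
      · simp at hc
      · have hq : q = (i₁, !ε) := by simpa using hc
        have := (List.isChain_cons_cons.mp hred).1
        rw [hq] at this
        exact this ⟨rfl, rfl⟩
    have hr := rst_head i₁ L'
    have hlead1 : lead i₁ ((i₁, ε) :: L') = lead i₁ L' + 1 := by rw [lead, if_pos rfl]
    have hrst1 : rst i₁ ((i₁, ε) :: L') = rst i₁ L' := by rw [rst, if_pos rfl]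
    cases ε with
    | false =>
      have hngn : ngn ((i₁, false) :: L') = 1 + ngn L' := rfl
      have central : ∀ s, 0 < (-1 : ℤ) ^ (ngn L' + s + lead i₁ L') *
          Q ((i₁, false) :: L') (List.replicate s i₁ ++ rst i₁ L') := by
        intro s
        rw [key i₁ false L' s hr, Finset.mul_sum]
        by_cases hh : L'.head? = some (i₁, false)
        · apply Finset.sum_pos
          · intro k hk
            have hks : k ≤ s := by simp only [Finset.mem_range] at hk; omega
            have ht := (IH hred' i₁ (s - k)).1 hh
            have hc : c false k = (-1 : ℤ) ^ k := rfl
            rw [hc]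
            exact absorb (pos_congr (by omega) ht)
          · exact ⟨0, Finset.mem_range.mpr (by omega)⟩
        · have hl0 : lead i₁ L' = 0 := by
            rcases L' with _ | ⟨⟨j, b⟩, L''⟩
            · rfl
            · by_cases hj : j = i₁
              · subst hj
                cases b with
                | false => exact absurd rfl hh
                | true => exact absurd rfl hcomp
              · rw [lead, if_neg hj]
          have h0 : ∀ k ∈ Finset.range (s + 1), k ≠ s →
              (-1 : ℤ) ^ (ngn L' + s + lead i₁ L') *
                (c false k * Q L' (List.replicate (s - k) i₁ ++ rst i₁ L')) = 0 := by
            intro k hk hks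
            have hkk : k ≤ s := by simp only [Finset.mem_range] at hk; omega
            rw [(IH hred' i₁ (s - k)).2.2 hh (by omega), mul_zero, mul_zero]
          rw [Finset.sum_eq_single_of_mem s (Finset.mem_range.mpr (by omega)) h0]
          have hc : c false s = (-1 : ℤ) ^ s := rfl
          rw [hc, Nat.sub_self]
          have ht := (IH hred' i₁ 0).2.1 hh (by omega)
          exact absorb (pos_congr (by omega) ht)
      refine ⟨?_, ?_, ?_⟩
      · intro hh
        have hpair : (i₁, false) = (i, false) := by simpa using hh
        have hi : i₁ = i := congrArg Prod.fst hpair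
        subst hi
        rw [hrst1, hlead1, hngn]
        exact pos_congr (by omega) (central m)
      · intro hne hm
        have hi : i₁ ≠ i := by
          intro h; subst h; exact hne rfl
        have hl : lead i ((i₁, false) :: L') = 0 := by rw [lead, if_neg hi]
        have hm0 : m = 0 := by omega
        subst hm0
        have hrt : rst i ((i₁, false) :: L') = wd ((i₁, false) :: L') := by
          rw [rst, if_neg hi]; rfl
        rw [List.replicate_zero, List.nil_append, hrt, wd_eq i₁ ((i₁, false) :: L'),
          hrst1, hlead1, hngn]
        exact pos_congr (by omega) (central (lead i₁ L' + 1))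
      · intro hne hm
        have hi : i₁ ≠ i := by
          intro h; subst h; exact hne rfl
        have hrt : rst i ((i₁, false) :: L') = wd ((i₁, false) :: L') := by
          rw [rst, if_neg hi]; rfl
        rw [hrt]
        apply foreign
        · have hl : lead i ((i₁, false) :: L') = 0 := by rw [lead, if_neg hi]
          omega
        · show (wd ((i₁, false) :: L')).head? ≠ some i
          have hwd : wd ((i₁, false) :: L') = i₁ :: wd L' := rfl
          rw [hwd]
          simp [hi]
    | true =>
      have hngn : ngn ((i₁, true) :: L') = ngn L' := by simp [ngn]
      have hcomp' : L'.head? ≠ some (i₁, false) := by simpa using hcomp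
      have central : ∀ s, (s ≤ lead i₁ L' + 1 →
          0 < (-1 : ℤ) ^ (ngn L') *
            Q ((i₁, true) :: L') (List.replicate s i₁ ++ rst i₁ L')) ∧
          (lead i₁ L' + 1 < s →
          Q ((i₁, true) :: L') (List.replicate s i₁ ++ rst i₁ L') = 0) := by
        intro s
        constructor
        · intro hs
          rw [key i₁ true L' s hr, Finset.mul_sum]
          apply Finset.sum_pos'
          · intro k hk
            by_cases hk1 : k ≤ 1
            · have hc : c true k = 1 := by simp [c, hk1]
              rw [hc, one_mul]
              by_cases hsk : s - k ≤ lead i₁ L'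
              · exact le_of_lt ((IH hred' i₁ (s - k)).2.1 hcomp' hsk)
              · rw [(IH hred' i₁ (s - k)).2.2 hcomp' (by omega), mul_zero]
            · have hc : c true k = 0 := by simp [c, hk1]
              rw [hc, zero_mul, mul_zero]
          · refine ⟨min s 1, Finset.mem_range.mpr (by omega), ?_⟩
            have hmin : min s 1 ≤ 1 := Nat.min_le_right s 1
            have hc : c true (min s 1) = 1 := by simp [c, hmin]
            rw [hc, one_mul]
            exact (IH hred' i₁ (s - min s 1)).2.1 hcomp' (by omega)
        · intro hs
          rw [key i₁ true L' s hr]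
          apply Finset.sum_eq_zero
          intro k hk
          by_cases hk1 : k ≤ 1
          · rw [(IH hred' i₁ (s - k)).2.2 hcomp' (by omega), mul_zero]
          · have hc : c true k = 0 := by simp [c, hk1]
            rw [hc, zero_mul]
      refine ⟨?_, ?_, ?_⟩
      · intro hh
        exact absurd hh (by simp)
      · intro _ hm
        by_cases hi : i₁ = i
        · subst hi
          rw [hrst1, hngn]
          rw [hlead1] at hm
          exact (central m).1 hm
        · have hl : lead i ((i₁, true) :: L') = 0 := by rw [lead, if_neg hi]
          have hm0 : m = 0 := by omega
          subst hm0
          have hrt : rst i ((i₁, true) :: L') = wd ((i₁, true) :: L') := by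
            rw [rst, if_neg hi]; rfl
          rw [List.replicate_zero, List.nil_append, hrt, wd_eq i₁ ((i₁, true) :: L'),
            hrst1, hlead1, hngn]
          exact (central (lead i₁ L' + 1)).1 le_rfl
      · intro _ hm
        by_cases hi : i₁ = i
        · subst hi
          rw [hrst1]
          rw [hlead1] at hm
          exact (central m).2 hm
        · have hrt : rst i ((i₁, true) :: L') = wd ((i₁, true) :: L') := by
            rw [rst, if_neg hi]; rfl
          rw [hrt]
          apply foreign
          · have hl : lead i ((i₁, true) :: L') = 0 := by rw [lead, if_neg hi]
            omega
          · have hwd : wd ((i₁, true) :: L') = i₁ :: wd L' := rfl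
            rw [hwd]
            simp [hi]
theorem red_toWord (g : FreeGroup (Fin n)) :
    List.Chain' (fun a b => ¬(a.1 = b.1 ∧ b.2 = !a.2)) g.toWord := by
  have key : ∀ L : List (Fin n × Bool),
      (∀ (L₂ L₃ : List (Fin n × Bool)) (x : Fin n) (b : Bool),
        L ≠ L₂ ++ (x, b) :: (x, !b) :: L₃) →
      List.Chain' (fun a b => ¬(a.1 = b.1 ∧ b.2 = !a.2)) L := by
    intro L
    induction L with
    | nil => intro _; exact List.isChain_nil
    | cons a L ih =>
      intro h
      rcases L with _ | ⟨b, L'⟩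
      · exact List.isChain_singleton _
      · refine List.isChain_cons_cons.mpr ?_
        constructor
        · rintro ⟨h1, h2⟩
          obtain ⟨xa, ba⟩ := a
          obtain ⟨xb, bb⟩ := b
          simp only at h1 h2
          subst h1
          subst h2
          exact h [] L' xa ba rfl
        · apply ih
          intro L₂ L₃ x bb hh
          exact h (a :: L₂) L₃ x bb (by rw [hh]; rfl)
  apply key
  intro L₂ L₃ x b hh
  exact FreeGroup.reduce.not ((FreeGroup.reduce_toWord g).trans hh)

theorem geom_inv (i : Fin n) : (1 + NC.X i) * NC.geom i = 1 := by
  funext w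
  rw [mul_apply, one_apply]
  rcases w with _ | ⟨a, w'⟩
  · simp [onePlusX_apply, NC.geom]
  · rw [if_neg (by simp)]
    have hzero : ∀ k ∈ Finset.range ((a :: w').length + 1), k ∉ Finset.range 2 →
        (1 + NC.X i) ((a :: w').take k) * NC.geom i ((a :: w').drop k) = 0 := by
      intro k hk hnk
      simp only [Finset.mem_range, List.length_cons] at hk hnk
      have hlen : ((a :: w').take k).length = k := by
        rw [List.length_take]; simp; omega
      have h1 : (a :: w').take k ≠ [] := by
        intro h
        rw [h] at hlen
        simp at hlen
        omega
      have h2 : (a :: w').take k ≠ [i] := by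
        intro h
        rw [h] at hlen
        simp at hlen
        omega
      rw [onePlusX_apply, if_neg h1, if_neg h2, add_zero, zero_mul]
    rw [← Finset.sum_subset (Finset.range_subset_range.mpr (by simp)) hzero,
      Finset.sum_range_succ, Finset.sum_range_one]
    have e0 : (1 + NC.X i) ((a :: w').take 0) = 1 := by
      rw [List.take_zero, onePlusX_apply]; simp
    have e1 : (1 + NC.X i) ((a :: w').take 1) = if a = i then 1 else 0 := by
      have h1 : (a :: w').take 1 = [a] := rfl
      rw [h1, onePlusX_apply]
      simp
    rw [e0, e1, List.drop_zero, one_mul]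
    have hd1 : (a :: w').drop 1 = w' := rfl
    rw [hd1]
    by_cases hai : a = i
    · subst hai
      rw [if_pos rfl, one_mul]
      by_cases hall : ∀ x ∈ w', x = a
      · have hga : NC.geom a (a :: w') = (-1) ^ (w'.length + 1) := by
          rw [NC.geom, if_pos]
          · simp
          · intro x hx
            rcases List.mem_cons.mp hx with h | h
            · exact h
            · exact hall _ h
        have hgw : NC.geom a w' = (-1) ^ w'.length := by
          rw [NC.geom, if_pos hall]
        rw [hga, hgw]
        ring
      · have hga : NC.geom a (a :: w') = 0 := by
          rw [NC.geom, if_neg]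
          intro hc
          exact hall (fun x hx => hc x (List.mem_cons_of_mem _ hx))
        have hgw : NC.geom a w' = 0 := by rw [NC.geom, if_neg hall]
        rw [hga, hgw]
        ring
    · rw [if_neg hai, zero_mul, add_zero]
      rw [NC.geom, if_neg]
      intro hc
      exact hai (hc a List.mem_cons_self)
theorem val_mk (M : FreeGroup (Fin n) →* (NC n)ˣ)
    (hM : ∀ i : Fin n, ((M (FreeGroup.of i) : (NC n)ˣ) : NC n) = 1 + NC.X i)
    (L : List (Fin n × Bool)) :
    ((M (FreeGroup.mk L) : (NC n)ˣ) : NC n) = Q L := by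
  have hinv : ∀ i : Fin n, (((M (FreeGroup.of i))⁻¹ : (NC n)ˣ) : NC n) = NC.geom i := by
    intro i
    have h1 : ((M (FreeGroup.of i) : (NC n)ˣ) : NC n) * NC.geom i = 1 := by
      rw [hM]; exact geom_inv i
    calc (((M (FreeGroup.of i))⁻¹ : (NC n)ˣ) : NC n)
        = (((M (FreeGroup.of i))⁻¹ : (NC n)ˣ) : NC n) *
            (((M (FreeGroup.of i) : (NC n)ˣ) : NC n) * NC.geom i) := by rw [h1, mul_one]
      _ = ((((M (FreeGroup.of i))⁻¹ * M (FreeGroup.of i) : (NC n)ˣ) : NC n)) * NC.geom i := by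
          rw [Units.val_mul, mul_assoc]
      _ = NC.geom i := by simp
  have hMl : M = FreeGroup.lift (fun j => M (FreeGroup.of j)) :=
    FreeGroup.ext_hom _ _ (fun a => by rw [FreeGroup.lift_apply_of])
  rw [hMl, FreeGroup.lift_mk, ← Units.coeHom_apply, map_list_prod, List.map_map, Q]
  congr 1
  apply List.map_congr_left
  intro p _
  obtain ⟨j, b⟩ := p
  cases b
  · show (((M (FreeGroup.of j))⁻¹ : (NC n)ˣ) : NC n) = F (j, false)
    rw [hinv j]; rfl
  · show ((M (FreeGroup.of j) : (NC n)ˣ) : NC n) = F (j, true)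
    rw [hM j]; rfl


end MagnusProof

/-- The Magnus expansion `M : F_{m_1,…,m_n} → ℤ⟨x_1,…,x_n⟩` (the group
homomorphism into the units of the noncommutative power series ring determined by
`M(m_i) = 1 + x_i`) is injective. -/
theorem magnus_expansion_injective (n : ℕ) (M : FreeGroup (Fin n) →* (NC n)ˣ)
    (hM : ∀ i : Fin n, ((M (FreeGroup.of i) : (NC n)ˣ) : NC n) = 1 + NC.X i) :
    Function.Injective M := by
  rw [injective_iff_map_eq_one]
  intro g hg
  by_contra hne
  have hL : g.toWord ≠ [] := fun h => hne (FreeGroup.toWord_eq_nil_iff.mp h)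
  have hred := MagnusProof.red_toWord g
  have hQ1 : MagnusProof.Q g.toWord = 1 := by
    have h := MagnusProof.val_mk M hM g.toWord
    rw [FreeGroup.mk_toWord] at h
    rw [← h, hg, Units.val_one]
  have hwd : MagnusProof.wd g.toWord ≠ [] := by
    intro h
    exact hL (List.map_eq_nil_iff.mp h)
  have hzero : MagnusProof.Q g.toWord (MagnusProof.wd g.toWord) = 0 := by
    rw [hQ1, MagnusProof.one_apply, if_neg hwd]
  rcases hW : g.toWord with _ | ⟨⟨i₁, ε⟩, L'⟩
  · exact hL hW
  · rw [hW] at hred hzero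
    have h1 := MagnusProof.main ((i₁, ε) :: L') hred i₁
      (MagnusProof.lead i₁ ((i₁, ε) :: L'))
    have hword : List.replicate (MagnusProof.lead i₁ ((i₁, ε) :: L')) i₁ ++
        MagnusProof.rst i₁ ((i₁, ε) :: L') = MagnusProof.wd ((i₁, ε) :: L') :=
      (MagnusProof.wd_eq _ _).symm
    by_cases hh : ((i₁, ε) :: L').head? = some (i₁, false)
    · have hpos := h1.1 hh
      rw [hword, hzero, mul_zero] at hpos
      exact lt_irrefl 0 hpos
    · have hpos := h1.2.1 hh le_rfl
      rw [hword, hzero, mul_zero] at hpos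
      exact lt_irrefl 0 hpos
end

section
/- For any element a of the free group F_{m_1,…,m_n}, the Magnus expansions M(a^{-1} m_i a) and M(a^{-1} m_i^{-1} a) are each of the form 1 + T, where every monomial appearing in T contains the variable x_i at least once. -/
namespace NC
variable {n : ℕ}

/-- Setting `x_i = 0` in a noncommutative power series. -/
def proj (i : Fin n) (f : NC n) : NC n := fun w => if i ∈ w then 0 else f w

theorem one_apply (w : List (Fin n)) : (1 : NC n) w = if w = [] then 1 else 0 := rfl

theorem proj_one (i : Fin n) : proj i (1 : NC n) = 1 := by
  funext w
  by_cases h : i ∈ w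
  · have hne : w ≠ [] := by rintro rfl; simp at h
    simp [proj, h, one_apply, hne]
  · simp [proj, h]

theorem proj_mul (i : Fin n) (f g : NC n) :
    proj i (f * g) = proj i f * proj i g := by
  funext w
  show proj i (mul' f g) w = mul' (proj i f) (proj i g) w
  by_cases h : i ∈ w
  · have : ∀ k ∈ Finset.range (w.length + 1),
        proj i f (w.take k) * proj i g (w.drop k) = 0 := by
      intro k _
      have : i ∈ w.take k ∨ i ∈ w.drop k := by
        rw [← List.mem_append, List.take_append_drop]; exact h
      rcases this with h' | h' <;> simp [proj, h']
    rw [show proj i (mul' f g) w = 0 from if_pos h,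
        show mul' (proj i f) (proj i g) w = 0 from Finset.sum_eq_zero this]
  · have hf : ∀ k, i ∉ w.take k := fun k hk => h (List.mem_of_mem_take hk)
    have hg : ∀ k, i ∉ w.drop k := fun k hk => h (List.mem_of_mem_drop hk)
    simp only [proj, h, if_neg, mul']
    refine Finset.sum_congr rfl fun k _ => ?_
    simp [hf k, hg k]

theorem proj_add (i : Fin n) (f g : NC n) :
    proj i (f + g) = proj i f + proj i g := by
  funext w
  show proj i (f + g) w = proj i f w + proj i g w
  by_cases h : i ∈ w <;> simp [proj, h, add_apply]

theorem proj_zero (i : Fin n) : proj i (0 : NC n) = 0 := by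
  funext w; by_cases h : i ∈ w <;> simp [proj, h, zero_apply]

/-- `proj i` as a ring homomorphism. -/
def projHom (i : Fin n) : NC n →+* NC n where
  toFun := proj i
  map_one' := proj_one i
  map_mul' := proj_mul i
  map_zero' := proj_zero i
  map_add' := proj_add i

theorem extract (i : Fin n) (f : NC n) (h : proj i f = 1) :
    ∃ T : NC n, f = 1 + T ∧ ∀ w : List (Fin n), T w ≠ 0 → i ∈ w := by
  refine ⟨f - 1, by abel, fun w hw => ?_⟩
  by_contra h'
  apply hw
  have hw1 : f w = (1 : NC n) w := by
    have := congrFun h w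
    simpa [proj, h'] using this
  show f w - (1 : NC n) w = 0
  rw [hw1, sub_self]

end NC

/-- STATEMENT 5b -/
theorem magnus_of_conjugate_of_generator (n : ℕ) (M : FreeGroup (Fin n) →* (NC n)ˣ)
    (hM : ∀ i : Fin n, ((M (FreeGroup.of i) : (NC n)ˣ) : NC n) = 1 + NC.X i)
    (a : FreeGroup (Fin n)) (i : Fin n) :
    (∃ T : NC n,
        ((M (a⁻¹ * FreeGroup.of i * a) : (NC n)ˣ) : NC n) = 1 + T ∧
        ∀ w : List (Fin n), T w ≠ 0 → i ∈ w) ∧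
    (∃ T : NC n,
        ((M (a⁻¹ * (FreeGroup.of i)⁻¹ * a) : (NC n)ˣ) : NC n) = 1 + T ∧
        ∀ w : List (Fin n), T w ≠ 0 → i ∈ w) := by
  set φ : FreeGroup (Fin n) →* (NC n)ˣ :=
    (Units.map (NC.projHom i).toMonoidHom).comp M with hφ
  have hval : ∀ g : FreeGroup (Fin n),
      ((φ g : (NC n)ˣ) : NC n) = NC.proj i ((M g : (NC n)ˣ) : NC n) := fun g => rfl
  have h1 : φ (FreeGroup.of i) = 1 := by
    apply Units.ext
    rw [hval, hM i]
    funext w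
    show NC.proj i (1 + NC.X i) w = (1 : NC n) w
    by_cases h : i ∈ w
    · have hne : w ≠ [] := by rintro rfl; simp at h
      simp [NC.proj, h, NC.one_apply, hne]
    · have hX : NC.X i w = 0 := by
        have : w ≠ [i] := by rintro rfl; simp at h
        simp [NC.X, this]
      simp only [NC.proj, if_neg h, NC.add_apply, hX, add_zero]
  constructor
  · apply NC.extract
    rw [← hval]
    have : φ (a⁻¹ * FreeGroup.of i * a) = 1 := by
      rw [map_mul, map_mul, map_inv, h1, mul_one, inv_mul_cancel]
    rw [this]; rfl
  · apply NC.extract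
    rw [← hval]
    have : φ (a⁻¹ * (FreeGroup.of i)⁻¹ * a) = 1 := by
      rw [map_mul, map_mul, map_inv, map_inv, h1, inv_one, mul_one, inv_mul_cancel]
    rw [this]; rfl
end

section
/- For any elements f, g of the free group F_{m_1,…,m_n} and any generator m_i, the Magnus expansion of the commutator [f^{-1} m_i f, g^{-1} m_i g] equals 1 plus a sum of monomials each of which contains the variable x_i at least twice. -/
namespace NC
variable {n : ℕ}

theorem mul_apply (f g : NC n) (w : List (Fin n)) :
    (f * g) w = ∑ j ∈ Finset.range (w.length + 1), f (w.take j) * g (w.drop j) := rfl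

theorem sub_apply (f g : NC n) (w : List (Fin n)) : (f - g) w = f w - g w := rfl

/-- Every nonzero coefficient word of `f` contains `i` at least `k` times. -/
def Deg (i : Fin n) (k : ℕ) (f : NC n) : Prop := ∀ w, f w ≠ 0 → k ≤ w.count i

theorem Deg.zero_any (i : Fin n) (f : NC n) : Deg i 0 f := fun _ _ => Nat.zero_le _

theorem Deg.mul {i : Fin n} {k l : ℕ} {f g : NC n} (hf : Deg i k f) (hg : Deg i l g) :
    Deg i (k + l) (f * g) := by
  intro w hw
  rw [mul_apply] at hw
  obtain ⟨j, -, hj⟩ := Finset.exists_ne_zero_of_sum_ne_zero hw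
  have h1 := hf _ (left_ne_zero_of_mul hj)
  have h2 := hg _ (right_ne_zero_of_mul hj)
  have hc : w.count i = (w.take j).count i + (w.drop j).count i := by
    conv_lhs => rw [← List.take_append_drop j w]
    rw [List.count_append]
  omega

theorem Deg.sub {i : Fin n} {k : ℕ} {f g : NC n} (hf : Deg i k f) (hg : Deg i k g) :
    Deg i k (f - g) := by
  intro w hw
  rw [sub_apply] at hw
  rcases eq_or_ne (f w) 0 with h | h
  · exact hg w (by intro h2; apply hw; rw [h, h2, sub_zero])
  · exact hf w h

theorem Deg.X (i : Fin n) : Deg i 1 (X i) := by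
  intro w hw
  simp only [NC.X] at hw
  split at hw
  · subst ‹w = [i]›; simp
  · simp at hw

end NC

open scoped commutatorElement

/-- For any `f, g` in the free group and any generator `m_i`, the Magnus
expansion of the commutator `[f⁻¹ m_i f, g⁻¹ m_i g]` equals `1` plus a sum of monomials
each containing the variable `x_i` at least twice. -/
theorem magnus_commutator_same_generator (n : ℕ) (M : FreeGroup (Fin n) →* (NC n)ˣ)
    (hM : ∀ i : Fin n, ((M (FreeGroup.of i) : (NC n)ˣ) : NC n) = 1 + NC.X i)
    (f g : FreeGroup (Fin n)) (i : Fin n) :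
    ∃ T : NC n,
      ((M ⁅f⁻¹ * FreeGroup.of i * f, g⁻¹ * FreeGroup.of i * g⁆ : (NC n)ˣ) : NC n) = 1 + T ∧
      ∀ w : List (Fin n), T w ≠ 0 → 2 ≤ w.count i := by
  set p := f⁻¹ * FreeGroup.of i * f with hp
  set q := g⁻¹ * FreeGroup.of i * g with hq
  set A : NC n := ((M f : (NC n)ˣ) : NC n) with hA
  set A' : NC n := (((M f)⁻¹ : (NC n)ˣ) : NC n) with hA'
  set B : NC n := ((M g : (NC n)ˣ) : NC n) with hB
  set B' : NC n := (((M g)⁻¹ : (NC n)ˣ) : NC n) with hB'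
  set a : NC n := A' * NC.X i * A with ha
  set b : NC n := B' * NC.X i * B with hb
  have hA'A : A' * A = 1 := Units.inv_mul (M f)
  have hB'B : B' * B = 1 := Units.inv_mul (M g)
  have hu : ((M p : (NC n)ˣ) : NC n) = 1 + a := by
    rw [hp, map_mul, map_mul, map_inv, Units.val_mul, Units.val_mul, hM, ha,
      ← hA, ← hA', mul_add, add_mul, mul_one, hA'A, mul_assoc]
  have hv : ((M q : (NC n)ˣ) : NC n) = 1 + b := by
    rw [hq, map_mul, map_mul, map_inv, Units.val_mul, Units.val_mul, hM, hb,
      ← hB, ← hB', mul_add, add_mul, mul_one, hB'B, mul_assoc]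
  set U : NC n := ((M p : (NC n)ˣ) : NC n) with hU
  set V : NC n := ((M q : (NC n)ˣ) : NC n) with hV
  set U' : NC n := (((M p)⁻¹ : (NC n)ˣ) : NC n) with hU'
  set V' : NC n := (((M q)⁻¹ : (NC n)ˣ) : NC n) with hV'
  have hUU' : U * U' = 1 := Units.mul_inv (M p)
  have hVV' : V * V' = 1 := Units.mul_inv (M q)
  refine ⟨(a * b - b * a) * U' * V', ?_, ?_⟩
  · have hcomm : ((M ⁅p, q⁆ : (NC n)ˣ) : NC n) = U * V * U' * V' := by
      rw [commutatorElement_def, map_mul, map_mul, map_mul, map_inv, map_inv,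
        Units.val_mul, Units.val_mul, Units.val_mul]
    have hswap : U * V = V * U + (a * b - b * a) := by
      rw [hu, hv]; noncomm_ring
    rw [hcomm, hswap, add_mul, add_mul, mul_assoc V U U', hUU', mul_one, hVV']
  · have h1 : NC.Deg i 1 a := by
      have := ((NC.Deg.zero_any i A').mul (NC.Deg.X i)).mul (NC.Deg.zero_any i A)
      exact this
    have h2 : NC.Deg i 1 b := by
      have := ((NC.Deg.zero_any i B').mul (NC.Deg.X i)).mul (NC.Deg.zero_any i B)
      exact this
    have h3 : NC.Deg i 2 (a * b - b * a) := (h1.mul h2).sub (h2.mul h1)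
    exact (h3.mul (NC.Deg.zero_any i U')).mul (NC.Deg.zero_any i V')
end

section
/- For any elements f, g of the free group F_{m_1,…,m_n} and distinct generators m_i, m_j, every monomial (other than the constant term 1) in the Magnus expansion of the commutator [f^{-1} m_i f, g^{-1} m_j g] contains both variables x_i and x_j. -/
section Aux
variable {n : ℕ}

theorem NC.mul_apply_s7 (a b : NC n) (w : List (Fin n)) :
    (a * b) w = ∑ k ∈ Finset.range (w.length + 1), a (w.take k) * b (w.drop k) := rfl

theorem NC.sub_apply_s7 (a b : NC n) (w : List (Fin n)) : (a - b) w = a w - b w := rfl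

/-- `C` is supported on words containing the letter `i`. -/
def NC.Supp (i : Fin n) (C : NC n) : Prop := ∀ w, C w ≠ 0 → i ∈ w

theorem NC.Supp.mul_left {i : Fin n} {C : NC n} (h : NC.Supp i C) (a : NC n) :
    NC.Supp i (a * C) := by
  intro w hw
  rw [NC.mul_apply_s7] at hw
  obtain ⟨k, -, hk⟩ := Finset.exists_ne_zero_of_sum_ne_zero hw
  exact List.drop_subset k w (h _ (right_ne_zero_of_mul hk))

theorem NC.Supp.mul_right {i : Fin n} {C : NC n} (h : NC.Supp i C) (a : NC n) :
    NC.Supp i (C * a) := by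
  intro w hw
  rw [NC.mul_apply_s7] at hw
  obtain ⟨k, -, hk⟩ := Finset.exists_ne_zero_of_sum_ne_zero hw
  exact List.take_subset k w (h _ (left_ne_zero_of_mul hk))

theorem NC.Supp.sub {i : Fin n} {C D : NC n} (hC : NC.Supp i C) (hD : NC.Supp i D) :
    NC.Supp i (C - D) := by
  intro w hw
  rw [NC.sub_apply_s7] at hw
  by_cases h : C w = 0
  · exact hD w (by intro h'; apply hw; rw [h, h']; ring)
  · exact hC w h

theorem NC.Supp.X (i : Fin n) : NC.Supp i (NC.X i) := by
  intro w hw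
  have : w = [i] := by by_contra h; exact hw (by simp [NC.X, h])
  simp [this]

theorem magnus_conj_aux (n : ℕ) (M : FreeGroup (Fin n) →* (NC n)ˣ)
    (hM : ∀ i : Fin n, ((M (FreeGroup.of i) : (NC n)ˣ) : NC n) = 1 + NC.X i)
    (f : FreeGroup (Fin n)) (i : Fin n) :
    ∃ A : NC n, ((M (f⁻¹ * FreeGroup.of i * f) : (NC n)ˣ) : NC n) = 1 + A ∧ NC.Supp i A := by
  refine ⟨(↑(M f)⁻¹ : NC n) * NC.X i * ↑(M f), ?_, ((NC.Supp.X i).mul_left _).mul_right _⟩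
  rw [map_mul, map_mul, map_inv, Units.val_mul, Units.val_mul, hM]
  calc (↑(M f)⁻¹ : NC n) * (1 + NC.X i) * ↑(M f)
      = (↑(M f)⁻¹ : NC n) * ↑(M f) + (↑(M f)⁻¹ : NC n) * NC.X i * ↑(M f) := by noncomm_ring
    _ = 1 + (↑(M f)⁻¹ : NC n) * NC.X i * ↑(M f) := by rw [Units.inv_mul]

end Aux

open scoped commutatorElement

/-- For any `f, g` in the free group and distinct generators `m_i, m_j`,
every monomial other than the constant term `1` in the Magnus expansion of the commutator
`[f⁻¹ m_i f, g⁻¹ m_j g]` contains both variables `x_i` and `x_j`. -/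
theorem magnus_commutator_distinct_generators (n : ℕ) (M : FreeGroup (Fin n) →* (NC n)ˣ)
    (hM : ∀ i : Fin n, ((M (FreeGroup.of i) : (NC n)ˣ) : NC n) = 1 + NC.X i)
    (f g : FreeGroup (Fin n)) (i j : Fin n) (hij : i ≠ j) :
    ∃ T : NC n,
      ((M ⁅f⁻¹ * FreeGroup.of i * f, g⁻¹ * FreeGroup.of j * g⁆ : (NC n)ˣ) : NC n) = 1 + T ∧
      ∀ w : List (Fin n), T w ≠ 0 → i ∈ w ∧ j ∈ w := by
  obtain ⟨A, hA, hAi⟩ := magnus_conj_aux n M hM f i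
  obtain ⟨B, hB, hBj⟩ := magnus_conj_aux n M hM g j
  set u := M (f⁻¹ * FreeGroup.of i * f) with hu
  set v := M (g⁻¹ * FreeGroup.of j * g) with hv
  refine ⟨(A * B - B * A) * ↑u⁻¹ * ↑v⁻¹, ?_, ?_⟩
  · have hcoe : ((M ⁅f⁻¹ * FreeGroup.of i * f, g⁻¹ * FreeGroup.of j * g⁆ : (NC n)ˣ) : NC n)
        = (↑u : NC n) * ↑v * ↑u⁻¹ * ↑v⁻¹ := by
      rw [map_commutatorElement, ← hu, ← hv, commutatorElement_def]
      simp only [Units.val_mul]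
    have key : (↑u : NC n) * ↑v = ↑v * ↑u + (A * B - B * A) := by
      rw [hA, hB]; noncomm_ring
    calc ((M ⁅f⁻¹ * FreeGroup.of i * f, g⁻¹ * FreeGroup.of j * g⁆ : (NC n)ˣ) : NC n)
        = (↑u : NC n) * ↑v * ↑u⁻¹ * ↑v⁻¹ := hcoe
      _ = ((↑v : NC n) * ↑u + (A * B - B * A)) * ↑u⁻¹ * ↑v⁻¹ := by rw [key]
      _ = (↑v : NC n) * ((↑u : NC n) * ↑u⁻¹) * ↑v⁻¹ + (A * B - B * A) * ↑u⁻¹ * ↑v⁻¹ := by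
          noncomm_ring
      _ = 1 + (A * B - B * A) * ↑u⁻¹ * ↑v⁻¹ := by
          rw [Units.mul_inv, mul_one, Units.mul_inv]
  · intro w hw
    have hi : NC.Supp i ((A * B - B * A) * ↑u⁻¹ * ↑v⁻¹) :=
      ((((hAi.mul_right B).sub (hAi.mul_left B)).mul_right _).mul_right _)
    have hj : NC.Supp j ((A * B - B * A) * ↑u⁻¹ * ↑v⁻¹) :=
      ((((hBj.mul_left A).sub (hBj.mul_right A)).mul_right _).mul_right _)
    exact ⟨hi w hw, hj w hw⟩
end

section
/- The Magnus expansion induces a well-defined group homomorphism MM : M(F_{m_1,…,m_k}) → units of R(x_1,…,x_k) from the free Milnor group into the ring with non-repeating variables; that is, the kernel of the composite F → ℤ⟨x⟩ → R(x_1,…,x_k) contains the normal subgroup generated by all commutators [m_i^h, m_i^{h'}]. -/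
/-- The monomial `x_{i_1} ⋯ x_{i_r}` in the free associative ℤ-algebra. -/
def ncMonomial {k : ℕ} (l : List (Fin k)) : FreeAlgebra ℤ (Fin k) :=
  (l.map (FreeAlgebra.ι ℤ)).prod

/-- The relation identifying with `0` every monomial in which some variable repeats;
`RingQuot (repeatRel k)` is the ring `R(x_1,…,x_k)` with non-repeating variables. -/
def repeatRel (k : ℕ) : FreeAlgebra ℤ (Fin k) → FreeAlgebra ℤ (Fin k) → Prop :=
  fun a b => (∃ l : List (Fin k), ¬ l.Nodup ∧ a = ncMonomial l) ∧ b = 0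

open scoped commutatorElement

lemma ncMonomial_append {k : ℕ} (l l' : List (Fin k)) :
    ncMonomial (l ++ l') = ncMonomial l * ncMonomial l' := by
  simp [ncMonomial, List.map_append, List.prod_append]

lemma mem_span_monomials {k : ℕ} (a : FreeAlgebra ℤ (Fin k)) :
    a ∈ Submodule.span ℤ (Set.range (ncMonomial (k := k))) := by
  induction a using FreeAlgebra.induction with
  | grade0 c =>
      have h : (algebraMap ℤ (FreeAlgebra ℤ (Fin k))) c = c • ncMonomial ([] : List (Fin k)) := by
        simp [ncMonomial, Algebra.algebraMap_eq_smul_one]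
      rw [h]
      exact Submodule.smul_mem _ _ (Submodule.subset_span ⟨[], rfl⟩)
  | grade1 j =>
      have h : FreeAlgebra.ι ℤ j = ncMonomial [j] := by simp [ncMonomial]
      rw [h]; exact Submodule.subset_span ⟨[j], rfl⟩
  | mul b c hb hc =>
      refine Submodule.span_induction (p := fun b _ => b * c ∈ Submodule.span ℤ (Set.range (ncMonomial (k := k)))) ?_ ?_ ?_ ?_ hb
      · intro x hx
        obtain ⟨l, rfl⟩ := hx
        refine Submodule.span_induction (p := fun c _ => ncMonomial l * c ∈ Submodule.span ℤ (Set.range (ncMonomial (k := k)))) ?_ ?_ ?_ ?_ hc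
        · rintro y ⟨l', rfl⟩
          rw [← ncMonomial_append]
          exact Submodule.subset_span ⟨l ++ l', rfl⟩
        · simp
        · intro x y _ _ hx hy; rw [mul_add]; exact Submodule.add_mem _ hx hy
        · intro a x _ hx; rw [mul_smul_comm]; exact Submodule.smul_mem _ _ hx
      · simp
      · intro x y _ _ hx hy; rw [add_mul]; exact Submodule.add_mem _ hx hy
      · intro a x _ hx; rw [smul_mul_assoc]; exact Submodule.smul_mem _ _ hx
  | add b c hb hc => exact Submodule.add_mem _ hb hc

lemma sandwich {k : ℕ} (i : Fin k) (r : RingQuot (repeatRel k)) :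
    RingQuot.mkRingHom (repeatRel k) (FreeAlgebra.ι ℤ i) * r *
      RingQuot.mkRingHom (repeatRel k) (FreeAlgebra.ι ℤ i) = 0 := by
  obtain ⟨a, rfl⟩ := RingQuot.mkRingHom_surjective (repeatRel k) r
  refine Submodule.span_induction
    (p := fun a _ => RingQuot.mkRingHom (repeatRel k) (FreeAlgebra.ι ℤ i) *
      RingQuot.mkRingHom (repeatRel k) a *
      RingQuot.mkRingHom (repeatRel k) (FreeAlgebra.ι ℤ i) = 0) ?_ ?_ ?_ ?_ (mem_span_monomials a)
  · rintro x ⟨l, rfl⟩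
    have h1 : FreeAlgebra.ι ℤ i * ncMonomial l * FreeAlgebra.ι ℤ i
        = ncMonomial ([i] ++ l ++ [i]) := by
      simp [ncMonomial_append, ncMonomial, mul_assoc]
    have h2 : ¬ ([i] ++ l ++ [i]).Nodup := by
      intro h
      exact (List.nodup_cons.mp h).1 (by simp)
    have h3 : RingQuot.mkRingHom (repeatRel k) (ncMonomial ([i] ++ l ++ [i])) = 0 := by
      have := RingQuot.mkRingHom_rel (r := repeatRel k)
        (x := ncMonomial ([i] ++ l ++ [i])) (y := 0) ⟨⟨_, h2, rfl⟩, rfl⟩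
      simpa using this
    rw [← map_mul, ← map_mul, h1, h3]
  · simp
  · intro x y _ _ hx hy
    rw [map_add, mul_add, add_mul, hx, hy, add_zero]
  · intro a x _ hx
    rw [map_zsmul, mul_smul_comm, smul_mul_assoc, hx]; simp

/-- The Magnus expansion induces a well-defined homomorphism
`MM : M(F_{m_1,…,m_k}) → R(x_1,…,x_k)ˣ` on the free Milnor group: for any group
homomorphism `M` from the free group to the units of `R(x_1,…,x_k)` with
`M(m_i) = 1 + x_i` (the composite `F → ℤ⟨x⟩ → R(x_1,…,x_k)`), the kernel of `M` contains
the normal subgroup generated by all commutators `[m_i^h, m_i^{h'}]`. -/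
theorem magnus_descends_to_free_milnor_group (k : ℕ)
    (M : FreeGroup (Fin k) →* (RingQuot (repeatRel k))ˣ)
    (hM : ∀ i : Fin k,
      ((M (FreeGroup.of i) : (RingQuot (repeatRel k))ˣ) : RingQuot (repeatRel k)) =
        1 + RingQuot.mkRingHom (repeatRel k) (FreeAlgebra.ι ℤ i)) :
    Subgroup.normalClosure
        {x : FreeGroup (Fin k) |
          ∃ (i : Fin k) (h h' : FreeGroup (Fin k)),
            x = ⁅h⁻¹ * FreeGroup.of i * h, h'⁻¹ * FreeGroup.of i * h'⁆} ≤
      M.ker := by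
  refine Subgroup.normalClosure_le_normal ?_
  rintro x ⟨i, h, h', rfl⟩
  rw [SetLike.mem_coe, MonoidHom.mem_ker, map_commutatorElement,
    commutatorElement_eq_one_iff_mul_comm]
  apply Units.ext
  push_cast [map_mul, map_inv]
  set X : RingQuot (repeatRel k) := RingQuot.mkRingHom (repeatRel k) (FreeAlgebra.ι ℤ i) with hX
  set P : RingQuot (repeatRel k) := (↑((M h)⁻¹) : RingQuot (repeatRel k)) with hP
  set Q : RingQuot (repeatRel k) := (↑(M h) : RingQuot (repeatRel k)) with hQ
  set P' : RingQuot (repeatRel k) := (↑((M h')⁻¹) : RingQuot (repeatRel k)) with hP'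
  set Q' : RingQuot (repeatRel k) := (↑(M h') : RingQuot (repeatRel k)) with hQ'
  have hPQ : P * Q = 1 := by rw [hP, hQ, ← Units.val_mul]; simp
  have hPQ' : P' * Q' = 1 := by rw [hP', hQ', ← Units.val_mul]; simp
  have key : ∀ A B C D : RingQuot (repeatRel k), A * B = 1 → C * D = 1 →
      (A * (1 + X) * B) * (C * (1 + X) * D) = 1 + A * X * B + C * X * D := by
    intro A B C D hAB hCD
    have h0 : X * (B * C) * X = 0 := sandwich i _
    calc (A * (1 + X) * B) * (C * (1 + X) * D)
        = A * B * (C * D) + A * X * (B * (C * D)) + (A * B) * C * X * D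
            + A * (X * (B * C) * X) * D := by noncomm_ring
      _ = 1 + A * X * B + C * X * D := by
          rw [h0, hAB, hCD]; noncomm_ring
  rw [hM i]
  calc P * (1 + X) * Q * (P' * (1 + X) * Q') = 1 + P * X * Q + P' * X * Q' :=
        key _ _ _ _ hPQ hPQ'
    _ = 1 + P' * X * Q' + P * X * Q := by abel
    _ = P' * (1 + X) * Q' * (P * (1 + X) * Q) := (key _ _ _ _ hPQ' hPQ).symm
end

section
/- Let π be a group normally generated by k elements g_1,…,g_k, and let Mπ be its Milnor group, the quotient of π by the normal subgroup generated by all [g_i, g_i^h] for 1 ≤ i ≤ k and h ∈ π. Then Mπ is nilpotent of class at most k+1, i.e., (Mπ)^{k+2} = 1 (equivalently, every (k+1)-fold iterated commutator of the generators vanishes when any generator repeats, forcing the lower central series to terminate). -/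
open Subgroup

open scoped commutatorElement

universe u

private lemma commute_of_closure {G : Type u} [Group G] {S : Set G}
    (hS : ∀ x ∈ S, ∀ y ∈ S, Commute x y) :
    ∀ x ∈ Subgroup.closure S, ∀ y ∈ Subgroup.closure S, Commute x y := by
  have h1 : Subgroup.closure S ≤ Subgroup.centralizer S :=
    (Subgroup.closure_le _).mpr fun s hs =>
      Subgroup.mem_centralizer_iff.mpr fun t ht => (hS t ht s hs)
  intro x hx y hy
  have h2 : S ⊆ ↑(Subgroup.centralizer {y}) := by
    intro s hs
    refine Subgroup.mem_centralizer_iff.mpr ?_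
    rintro t rfl
    exact (Subgroup.mem_centralizer_iff.mp (h1 hy) s hs).symm
  have h3 : Subgroup.closure S ≤ Subgroup.centralizer {y} :=
    (Subgroup.closure_le _).mpr h2
  have h4 : y * x = x * y := Subgroup.mem_centralizer_iff.mp (h3 hx) y rfl
  exact h4.symm

/-- Conjugates of `a` pairwise commute, given that `a` commutes with all its conjugates. -/
private lemma conjugates_commute {G : Type u} [Group G] {a : G}
    (hc : ∀ h : G, ⁅a, h⁻¹ * a * h⁆ = 1) :
    ∀ x ∈ Group.conjugatesOfSet ({a} : Set G),
      ∀ y ∈ Group.conjugatesOfSet ({a} : Set G), Commute x y := by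
  have key : ∀ h : G, Commute a (h⁻¹ * a * h) := fun h =>
    commutatorElement_eq_one_iff_commute.mp (hc h)
  intro x hx y hy
  rw [Group.mem_conjugatesOfSet_iff] at hx hy
  obtain ⟨a₁, ha₁, hcx⟩ := hx
  obtain ⟨a₂, ha₂, hcy⟩ := hy
  rw [Set.mem_singleton_iff] at ha₁ ha₂
  rw [ha₁] at hcx
  rw [ha₂] at hcy
  obtain ⟨c, rfl⟩ := isConj_iff.mp hcx
  obtain ⟨d, rfl⟩ := isConj_iff.mp hcy
  have h0 : Commute a ((d⁻¹ * c)⁻¹ * a * (d⁻¹ * c)) := key _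
  have h1 := h0.map (MulAut.conj c).toMonoidHom
  simp only [MulAut.conj_apply, MulEquiv.coe_toMonoidHom] at h1
  have e1 : c * ((d⁻¹ * c)⁻¹ * a * (d⁻¹ * c)) * c⁻¹ = d * a * d⁻¹ := by group
  rwa [e1] at h1

private lemma abelian_normalClosure_singleton {G : Type u} [Group G] {a : G}
    (hc : ∀ h : G, ⁅a, h⁻¹ * a * h⁆ = 1) :
    ∀ x ∈ Subgroup.normalClosure ({a} : Set G),
      ∀ y ∈ Subgroup.normalClosure ({a} : Set G), Commute x y :=
  commute_of_closure (conjugates_commute hc)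

private theorem milnor_aux : ∀ (k : ℕ) (G : Type u) [Group G] (g : Fin k → G),
    Subgroup.normalClosure (Set.range g) = ⊤ →
    (∀ (i : Fin k) (h : G), ⁅g i, h⁻¹ * g i * h⁆ = 1) →
    Subgroup.lowerCentralSeries (⊤ : Subgroup G) (k + 1) = ⊥ := by
  intro k
  induction k with
  | zero =>
    intro G _ g hg _
    have htriv : (⊤ : Subgroup G) ≤ ⊥ := by
      rw [← hg]
      exact Subgroup.normalClosure_le_normal (by simp [Set.range_eq_empty])
    exact eq_bot_iff.mpr (le_trans le_top htriv)
  | succ k IH =>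
    intro G _ g hg hc
    -- each normal closure of a single generator is abelian
    have habel : ∀ i : Fin (k+1), ∀ x ∈ Subgroup.normalClosure ({g i} : Set G),
        ∀ y ∈ Subgroup.normalClosure ({g i} : Set G), Commute x y :=
      fun i => abelian_normalClosure_singleton (hc i)
    -- lower central series term lies in every normal closure
    have hle : ∀ i : Fin (k+1),
        Subgroup.lowerCentralSeries (⊤ : Subgroup G) (k+1) ≤ Subgroup.normalClosure ({g i} : Set G) := by
      intro i
      set A := Subgroup.normalClosure ({g i} : Set G) with hA
      let φ : G →* G ⧸ A := QuotientGroup.mk' A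
      have hsurj : Function.Surjective φ := QuotientGroup.mk'_surjective A
      -- quotient is normally generated by the remaining elements
      have h1 : Subgroup.normalClosure (Set.range (φ ∘ g ∘ i.succAbove)) = ⊤ := by
        rw [eq_top_iff]
        have hmap : Subgroup.map φ (Subgroup.normalClosure (Set.range g)) =
            Subgroup.normalClosure (φ '' Set.range g) :=
          Subgroup.map_normalClosure _ _ hsurj
        rw [hg, Subgroup.map_top_of_surjective φ hsurj] at hmap
        rw [hmap]
        apply Subgroup.normalClosure_le_normal
        rintro x ⟨y, ⟨j, rfl⟩, rfl⟩
        by_cases hji : j = i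
        · subst hji
          have : φ (g j) = 1 :=
            (QuotientGroup.eq_one_iff _).mpr (Subgroup.subset_normalClosure rfl)
          rw [this]; exact Subgroup.one_mem _
        · obtain ⟨m, rfl⟩ := Fin.exists_succAbove_eq (x := j) (y := i) hji
          exact Subgroup.subset_normalClosure ⟨m, rfl⟩
      have h2 : ∀ (j : Fin k) (h' : G ⧸ A),
          ⁅(φ ∘ g ∘ i.succAbove) j, h'⁻¹ * (φ ∘ g ∘ i.succAbove) j * h'⁆ = 1 := by
        intro j h'
        obtain ⟨h, rfl⟩ := hsurj h'
        show ⁅φ (g (i.succAbove j)), (φ h)⁻¹ * φ (g (i.succAbove j)) * φ h⁆ = 1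
        rw [← map_inv, ← map_mul, ← map_mul, ← map_commutatorElement, hc, map_one]
      have hQ : Subgroup.lowerCentralSeries (⊤ : Subgroup (G ⧸ A)) (k + 1) = ⊥ := IH (G ⧸ A) _ h1 h2
      intro x hx
      have hx' : φ x ∈ Subgroup.map φ (Subgroup.lowerCentralSeries (⊤ : Subgroup G) (k+1)) := ⟨x, hx, rfl⟩
      have := lowerCentralSeries.map φ (k+1) hx'
      rw [hQ, Subgroup.mem_bot] at this
      exact (QuotientGroup.eq_one_iff _).mp this
    -- conclude
    show ⁅Subgroup.lowerCentralSeries (⊤ : Subgroup G) (k+1), (⊤ : Subgroup G)⁆ = ⊥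
    rw [eq_bot_iff]
    refine (Subgroup.commutator_le).mpr ?_
    intro p hp q _
    rw [Subgroup.mem_bot, commutatorElement_eq_one_iff_commute]
    -- show p commutes with everything, since everything is generated by conjugates
    have hq : q ∈ Subgroup.normalClosure (Set.range g) := by rw [hg]; trivial
    have hcent : Subgroup.normalClosure (Set.range g) ≤ Subgroup.centralizer {p} := by
      show Subgroup.closure (Group.conjugatesOfSet (Set.range g)) ≤ _
      refine (Subgroup.closure_le _).mpr ?_
      intro c hcmem
      rw [Group.mem_conjugatesOfSet_iff] at hcmem
      obtain ⟨a, ⟨j, rfl⟩, hconj⟩ := hcmem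
      have hcA : c ∈ Subgroup.normalClosure ({g j} : Set G) :=
        Subgroup.conjugatesOfSet_subset_normalClosure
          (Group.mem_conjugatesOfSet_iff.mpr ⟨g j, rfl, hconj⟩)
      have : Commute c p := habel j c hcA p (hle j hp)
      exact Subgroup.mem_centralizer_iff.mpr (by rintro t rfl; exact this.symm)
    have h5 : p * q = q * p := Subgroup.mem_centralizer_iff.mp (hcent hq) p rfl
    exact h5

/-- If `π` is normally generated by `g_1,…,g_k`, then its Milnor group
`Mπ = π / ⟨⟨[g_i, g_i^h]⟩⟩` is nilpotent of class at most `k+1`; that is,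
`(Mπ)^{k+2} = 1`, i.e. `lowerCentralSeries (Mπ) (k+1) = ⊥` in Mathlib's 0-indexed
convention (`lowerCentralSeries G m = G^{m+1}`). -/
theorem milnor_group_nilpotent (k : ℕ) (π : Type*) [Group π] (g : Fin k → π)
    (hg : Subgroup.normalClosure (Set.range g) = ⊤) :
    Subgroup.lowerCentralSeries (⊤ : Subgroup
      (π ⧸ Subgroup.normalClosure
        {x : π | ∃ (i : Fin k) (h : π), x = ⁅g i, h⁻¹ * g i * h⁆})) (k + 1) = ⊥ := by
  set N := Subgroup.normalClosure
    {x : π | ∃ (i : Fin k) (h : π), x = ⁅g i, h⁻¹ * g i * h⁆} with hN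
  let φ : π →* π ⧸ N := QuotientGroup.mk' N
  have hsurj : Function.Surjective φ := QuotientGroup.mk'_surjective N
  apply milnor_aux k (π ⧸ N) (φ ∘ g)
  · rw [Set.range_comp]
    rw [← Subgroup.map_normalClosure _ _ hsurj, hg, Subgroup.map_top_of_surjective φ hsurj]
  · intro i h'
    obtain ⟨h, rfl⟩ := hsurj h'
    show ⁅φ (g i), (φ h)⁻¹ * φ (g i) * φ h⁆ = 1
    rw [← map_inv, ← map_mul, ← map_mul, ← map_commutatorElement]
    exact (QuotientGroup.eq_one_iff _).mpr
      (Subgroup.subset_normalClosure ⟨i, h, rfl⟩)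
end
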